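/- Let s, s' : ℕ → ℝ assign positive sizes to three nodes u, v, w before and after a zig-zig rotation, with ranks r(x) = log₂(s(x)) and r'(x) = log₂(s'(x)). Assume r'(u) = r(w), r'(v) ≤ r'(u), r(v) ≥ r(u), and s(u) + s'(w) ≤ s'(u). Then the total rank change δ = r'(w) + r'(v) + r'(u) − r(w) − r(v) − r(u) satisfies δ ≤ 3(r'(u) − r(u)) − 2. -/

import Mathlib

open Real

lemma logb_two_add_logb_two_le {a b c : ℝ} (ha : 0 < a) (hb : 0 < b) (habc : a + b ≤ c) :
    logb 2 a + logb 2 b ≤ 2 * logb 2 c - 2 := by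
  have hprod : 4 * (a * b) ≤ c ^ 2 :=
    calc 4 * (a * b) ≤ (a + b) ^ 2 := by nlinarith [sq_nonneg (a - b)]
      _ ≤ c ^ 2 := by gcongr
  have hlog4 : logb 2 4 = 2 := by
    rw [show (4 : ℝ) = 2 ^ (2 : ℝ) by norm_num, logb_rpow two_pos (by norm_num)]
  calc logb 2 a + logb 2 b = logb 2 (4 * (a * b)) - 2 := by
        rw [logb_mul (by norm_num) (by positivity), logb_mul ha.ne' hb.ne', hlog4]; ring
    _ ≤ logb 2 (c ^ 2) - 2 := by gcongr; norm_num
    _ = 2 * logb 2 c - 2 := by rw [logb_pow]; push_cast; ring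

theorem zigzig_rank_change_general
    (su sv sw su' sv' sw' : ℝ)
    (hsu : 0 < su)
    (hsw' : 0 < sw')
    (h1 : Real.logb 2 su' = Real.logb 2 sw)
    (h2 : Real.logb 2 sv' ≤ Real.logb 2 su')
    (h3 : Real.logb 2 sv ≥ Real.logb 2 su)
    (h4 : su + sw' ≤ su') :
    Real.logb 2 sw' + Real.logb 2 sv' + Real.logb 2 su'
      - Real.logb 2 sw - Real.logb 2 sv - Real.logb 2 su
      ≤ 3 * (Real.logb 2 su' - Real.logb 2 su) - 2 := by
  -- `h1` cancels `r'(u)` against `r(w)`, and `h2`, `h3` bound `r'(v) - r(v)` by `r'(u) - r(u)`;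
  -- what remains is `r(u) + r'(w) ≤ 2 r'(u) - 2`.
  have hsum := logb_two_add_logb_two_le hsu hsw' h4
  linarith

/-- Zig-zig rank change bound: sizes before (`su, sv, sw`) and after (`su', sv', sw'`)
a zig-zig rotation at `u`, with ranks the base-2 logarithms of the sizes. -/
theorem zigzig_rank_change
    (su sv sw su' sv' sw' : ℝ)
    (hsu : 0 < su) (hsv : 0 < sv) (hsw : 0 < sw)
    (hsu' : 0 < su') (hsv' : 0 < sv') (hsw' : 0 < sw')
    (h1 : Real.logb 2 su' = Real.logb 2 sw)
    (h2 : Real.logb 2 sv' ≤ Real.logb 2 su')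
    (h3 : Real.logb 2 sv ≥ Real.logb 2 su)
    (h4 : su + sw' ≤ su') :
    Real.logb 2 sw' + Real.logb 2 sv' + Real.logb 2 su'
      - Real.logb 2 sw - Real.logb 2 sv - Real.logb 2 su
      ≤ 3 * (Real.logb 2 su' - Real.logb 2 su) - 2 :=
  zigzig_rank_change_general su sv sw su' sv' sw' hsu hsw' h1 h2 h3 h4
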